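/- arXiv:2601.06674 — 3 statements merged into one kernel-verified Lean document; each statement's English description precedes it below -/
import Mathlib

section
/- A first-order Markov chain on a finite state space S with stochastic transition matrix P is essentially irreducible (i.e., P has a unique recurrent/closed communicating class) if and only if the matrix Σ_{n=1}^{|S|} P^n has a column with all entries strictly positive. -/
open scoped Classical

/-- The set of suffix lengths `i` at which the transition kernel `p` already decides
(positivity vs. nullity) the transition to `a` from any context ending in the last `i`
letters of `x`. -/
def tauSet {A : Type*} (m : ℕ) (p : List A → A → ℝ) (x : List A) (a : A) : Set ℕ :=
  {i : ℕ | (∀ y : List A, y.length = m - i → p (y ++ x.drop (m - i)) a = 0) ∨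
    (∀ y : List A, y.length = m - i → 0 < p (y ++ x.drop (m - i)) a)}

noncomputable def tau {A : Type*} (m : ℕ) (p : List A → A → ℝ) (x : List A) (a : A) : ℕ :=
  sInf (tauSet m p x a)

noncomputable def tauX {A : Type*} (m : ℕ) (p : List A → A → ℝ) (x : List A) : ℕ :=
  sSup {n : ℕ | ∃ a : A, n = tau m p x a}

/-- The order of the skeleton: `K = sup_x sup_a τ(x,a)`. -/
noncomputable def skOrder {A : Type*} (m : ℕ) (p : List A → A → ℝ) : ℕ :=
  sSup {n : ℕ | ∃ (x : List A) (a : A), x.length = m ∧ n = tau m p x a}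

/-- The skeleton of the kernel `p`. -/
noncomputable def skeleton {A : Type*} (m : ℕ) (p : List A → A → ℝ) : Set (List A) :=
  {w | ∃ x : List A, x.length = m ∧ w = x.drop (m - tauX m p x)}

/-- The induced first-order transition matrix on `A^m`. -/
noncomputable def PP {A : Type*} (m : ℕ) (p : List A → A → ℝ) :
    Matrix (List.Vector A m) (List.Vector A m) ℝ := fun x z =>
  if h : ∃ a : A, z.toList = x.toList.drop 1 ++ [a] then p x.toList h.choose else 0

/-- The skeleton-matrix entry, as a proposition (`Mprop m K p u v ↔ 𝕄(u,v) = 1`):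
`v` is the shift of `u` by a letter `a`, and every length-`m` context ending in `u`
assigns positive probability to `a`. -/
def Mprop {A : Type*} (m K : ℕ) (p : List A → A → ℝ) (u v : List A) : Prop :=
  u.length = K ∧ ∃ a : A, v = u.drop 1 ++ [a] ∧
    ∀ y : List A, y.length = m - K → 0 < p (y ++ u) a

/-- The skeleton matrix as a relation on `A^K`. -/
def Mrel {A : Type*} (m K : ℕ) (p : List A → A → ℝ)
    (u v : List.Vector A K) : Prop :=
  Mprop m K p u.toList v.toList

/-- The set `𝒜` of `𝕄`-admissible words of length `m` (as lists). -/
def admissible {A : Type*} (m K : ℕ) (p : List A → A → ℝ) (w : List A) : Prop :=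
  ∀ i : ℕ, i + K < m → Mprop m K p ((w.drop i).take K) ((w.drop (i + 1)).take K)

/-- Boolean powers of a binary matrix (relation): `relPow R n i j ↔ R^n(i,j) = 1`. -/
def relPow {E : Type*} (R : E → E → Prop) : ℕ → E → E → Prop
  | 0, i, j => i = j
  | n + 1, i, j => ∃ k, relPow R n i k ∧ R k j

def relLeads {E : Type*} (R : E → E → Prop) (i j : E) : Prop :=
  ∃ n : ℕ, 1 ≤ n ∧ relPow R n i j

def relComm {E : Type*} (R : E → E → Prop) (i j : E) : Prop :=
  i = j ∨ (relLeads R i j ∧ relLeads R j i)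

/-- `C` is a communicating class of the binary matrix `R`. -/
def relIsClass {E : Type*} (R : E → E → Prop) (C : Set E) : Prop :=
  ∃ i : E, C = {j | relComm R i j}

/-- `C` is a closed set for the binary matrix `R`. -/
def relClosed {E : Type*} (R : E → E → Prop) (C : Set E) : Prop :=
  ∀ i ∈ C, ∀ j, relLeads R i j → j ∈ C

/-- `C` is a closed communicating class of the binary matrix `R`. -/
def relClosedClass {E : Type*} (R : E → E → Prop) (C : Set E) : Prop :=
  relIsClass R C ∧ relClosed R C

/-- Period of a state for a binary matrix: the gcd (= greatest common divisor) of the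
return times. -/
noncomputable def relPeriod {E : Type*} (R : E → E → Prop) (i : E) : ℕ :=
  sSup {d : ℕ | ∀ n : ℕ, 1 ≤ n → relPow R n i i → d ∣ n}

section MatrixDefs
variable {S : Type*} [Fintype S] [DecidableEq S]

/-- `i` leads to `j` for a (sub)stochastic matrix `P`. -/
def mleads (P : Matrix S S ℝ) (i j : S) : Prop := ∃ n : ℕ, 1 ≤ n ∧ 0 < (P ^ n) i j

def mcomm (P : Matrix S S ℝ) (i j : S) : Prop :=
  i = j ∨ (mleads P i j ∧ mleads P j i)

def mIsClass (P : Matrix S S ℝ) (C : Set S) : Prop := ∃ i : S, C = {j | mcomm P i j}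

def mClosed (P : Matrix S S ℝ) (C : Set S) : Prop :=
  ∀ i ∈ C, ∀ j, mleads P i j → j ∈ C

/-- `C` is a recurrent (= closed communicating) class of `P`. -/
def mClosedClass (P : Matrix S S ℝ) (C : Set S) : Prop := mIsClass P C ∧ mClosed P C

/-- A state is recurrent iff its communicating class is closed. -/
def mRecurrent (P : Matrix S S ℝ) (i : S) : Prop := mClosed P {j | mcomm P i j}

/-- Period of a state: the gcd of its return times. -/
noncomputable def mPeriod (P : Matrix S S ℝ) (i : S) : ℕ :=
  sSup {d : ℕ | ∀ n : ℕ, 1 ≤ n → 0 < (P ^ n) i i → d ∣ n}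

/-- Row-stochasticity. -/
def isStochastic (P : Matrix S S ℝ) : Prop :=
  (∀ i j, 0 ≤ P i j) ∧ ∀ i, ∑ j : S, P i j = 1

end MatrixDefs

/-- Row-stochasticity of an `m`-th order kernel given as a function on lists. -/
def isKernel {A : Type*} [Fintype A] (m : ℕ) (p : List A → A → ℝ) : Prop :=
  ∀ x : List A, x.length = m → (∀ a : A, 0 ≤ p x a) ∧ ∑ a : A, p x a = 1

/-- The candidate recurrent class `R = {ab : a ∈ C, ab ∈ 𝒜}` associated with a
closed class `C` of the skeleton matrix. -/
def Rclass {A : Type*} (m K : ℕ) (p : List A → A → ℝ)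
    (C : Set (List.Vector A K)) : Set (List.Vector A m) :=
  {w | (∃ c ∈ C, List.Vector.toList c = w.toList.take K) ∧ admissible m K p w.toList}

section AuxMarkov
variable {S : Type*} [Fintype S] [Nonempty S] [DecidableEq S] (P : Matrix S S ℝ)

lemma aux_exPos {ι : Type*} (s : Finset ι) (f : ι → ℝ) (h : 0 < ∑ x ∈ s, f x) :
    ∃ x ∈ s, 0 < f x := by
  by_contra hc
  push_neg at hc
  have : ∑ x ∈ s, f x ≤ 0 := Finset.sum_nonpos hc
  linarith

lemma aux_pow_nonneg (h : ∀ i j, 0 ≤ P i j) : ∀ (n : ℕ) (i j : S), 0 ≤ (P ^ n) i j := by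
  intro n
  induction n with
  | zero =>
    intro i j
    rw [pow_zero, Matrix.one_apply]
    split <;> norm_num
  | succ n ih =>
    intro i j
    rw [pow_succ, Matrix.mul_apply]
    exact Finset.sum_nonneg fun k _ => mul_nonneg (ih i k) (h k j)

lemma aux_pow_pos_mul (h : ∀ i j, 0 ≤ P i j) {m n : ℕ} {i j k : S}
    (h1 : 0 < (P ^ m) i j) (h2 : 0 < (P ^ n) j k) : 0 < (P ^ (m + n)) i k := by
  rw [pow_add, Matrix.mul_apply]
  refine Finset.sum_pos' (fun l _ => mul_nonneg (aux_pow_nonneg P h m i l) (aux_pow_nonneg P h n l k)) ?_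
  exact ⟨j, Finset.mem_univ j, mul_pos h1 h2⟩

lemma aux_path_of_pow (h : ∀ i j, 0 ≤ P i j) :
    ∀ (n : ℕ) (i j : S), 0 < (P ^ n) i j →
      ∃ f : ℕ → S, f 0 = i ∧ f n = j ∧ ∀ k < n, 0 < P (f k) (f (k + 1)) := by
  intro n
  induction n with
  | zero =>
    intro i j hp
    rw [pow_zero, Matrix.one_apply] at hp
    split at hp
    · rename_i hij
      exact ⟨fun _ => i, rfl, hij, fun k hk => absurd hk (by omega)⟩
    · exact absurd hp (lt_irrefl 0)
  | succ n ih =>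
    intro i j hp
    rw [pow_succ, Matrix.mul_apply] at hp
    obtain ⟨l, -, hl⟩ := aux_exPos _ _ hp
    have h1 : 0 < (P ^ n) i l := by
      rcases (aux_pow_nonneg P h n i l).lt_or_eq with h' | h'
      · exact h'
      · exfalso; rw [← h'] at hl; simp at hl
    have h2 : 0 < P l j := by
      rcases (h l j).lt_or_eq with h' | h'
      · exact h'
      · exfalso; rw [← h'] at hl; simp at hl
    obtain ⟨f, hf0, hfn, hstep⟩ := ih i l h1
    refine ⟨fun k => if k = n + 1 then j else f k, by simp [hf0], by simp, ?_⟩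
    intro k hk
    rcases Nat.lt_or_ge k n with hk' | hk'
    · simpa [Nat.ne_of_lt (by omega : k < n+1), Nat.ne_of_lt (by omega : k+1 < n+1), Nat.ne_of_lt hk'] using hstep k hk'
    · have hkn : k = n := by omega
      subst hkn
      simpa [Nat.ne_of_lt (by omega : k < k+1), hfn] using h2

lemma aux_pow_of_path (h : ∀ i j, 0 ≤ P i j) :
    ∀ (n : ℕ) (f : ℕ → S), (∀ k < n, 0 < P (f k) (f (k + 1))) → 0 < (P ^ n) (f 0) (f n) := by
  intro n
  induction n with
  | zero => intro f _; simp [Matrix.one_apply]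
  | succ n ih =>
    intro f hstep
    have h1 : 0 < (P ^ n) (f 0) (f n) := ih f fun k hk => hstep k (by omega)
    have h2 : 0 < (P ^ 1) (f n) (f (n + 1)) := by
      rw [pow_one]; exact hstep n (by omega)
    exact aux_pow_pos_mul P h h1 h2

lemma aux_shorten (h : ∀ i j, 0 ≤ P i j) :
    ∀ (n : ℕ), 1 ≤ n → ∀ i j : S, 0 < (P ^ n) i j →
      ∃ m : ℕ, 1 ≤ m ∧ m ≤ Fintype.card S ∧ 0 < (P ^ m) i j := by
  intro n
  induction n using Nat.strong_induction_on with
  | _ n ih =>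
    intro hn i j hp
    rcases le_or_gt n (Fintype.card S) with hle | hlt
    · exact ⟨n, hn, hle, hp⟩
    · obtain ⟨f, hf0, hfn, hstep⟩ := aux_path_of_pow P h n i j hp
      obtain ⟨a, b, hab, hfab⟩ : ∃ a b : Fin n, (a : ℕ) < b ∧ f a = f b := by
        obtain ⟨a, b, hne, hf⟩ :=
          Fintype.exists_ne_map_eq_of_card_lt (fun k : Fin n => f k) (by simpa using hlt)
        rcases lt_or_gt_of_ne (Fin.val_ne_of_ne hne) with h' | h'
        · exact ⟨a, b, h', hf⟩
        · exact ⟨b, a, h', hf.symm⟩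
      set d : ℕ := (b : ℕ) - a with hd
      have hd1 : 1 ≤ d := by omega
      have hbn : (b : ℕ) < n := b.isLt
      set m : ℕ := n - d with hm
      have hm1 : 1 ≤ m := by omega
      have hmn : m < n := by omega
      set g : ℕ → S := fun k => if k ≤ (a : ℕ) then f k else f (k + d) with hg
      have hgstep : ∀ k < m, 0 < P (g k) (g (k + 1)) := by
        intro k hk
        rcases Nat.lt_or_ge k a with hk' | hk'
        · have e1 : g k = f k := by
            simp only [hg]; rw [if_pos (show k ≤ (a:ℕ) by omega)]
          have e2 : g (k + 1) = f (k + 1) := by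
            simp only [hg]; rw [if_pos (show k + 1 ≤ (a:ℕ) by omega)]
          rw [e1, e2]
          exact hstep k (by omega)
        · have e1 : g k = f (k + d) := by
            rcases Nat.eq_or_lt_of_le hk' with h' | h'
            · subst h'
              have e : g (a:ℕ) = f a := by simp only [hg]; rw [if_pos le_rfl]
              rw [e, hfab]
              congr 1
              omega
            · simp only [hg]; rw [if_neg (show ¬ k ≤ (a:ℕ) by omega)]
          have e2 : g (k + 1) = f (k + 1 + d) := by
            simp only [hg]; rw [if_neg (show ¬ k + 1 ≤ (a:ℕ) by omega)]
          rw [e1, e2, show k + 1 + d = k + d + 1 by omega]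
          exact hstep (k + d) (by omega)
      have hg0 : g 0 = i := by simp [hg, hf0]
      have hgm : g m = j := by
        have : ¬ m ≤ (a : ℕ) := by omega
        simp only [hg, if_neg this]
        rw [show m + d = n by omega, hfn]
      have := aux_pow_of_path P h m g hgstep
      rw [hg0, hgm] at this
      exact ih m hmn hm1 i j this

end AuxMarkov

section MainAux
variable {S : Type*} [Fintype S] [Nonempty S] [DecidableEq S] (P : Matrix S S ℝ)

lemma aux_mleads_trans (h : ∀ i j, 0 ≤ P i j) {i j k : S}
    (h1 : mleads P i j) (h2 : mleads P j k) : mleads P i k := by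
  obtain ⟨m, hm, hm'⟩ := h1
  obtain ⟨n, hn, hn'⟩ := h2
  exact ⟨m + n, by omega, aux_pow_pos_mul P h hm' hn'⟩

lemma aux_mcomm_symm {i j : S} (h : mcomm P i j) : mcomm P j i := by
  rcases h with rfl | ⟨a, b⟩
  · exact Or.inl rfl
  · exact Or.inr ⟨b, a⟩

lemma aux_mcomm_trans (h0 : ∀ i j, 0 ≤ P i j) {i j k : S}
    (h1 : mcomm P i j) (h2 : mcomm P j k) : mcomm P i k := by
  rcases h1 with rfl | ⟨a, b⟩
  · exact h2
  · rcases h2 with rfl | ⟨c, d⟩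
    · exact Or.inr ⟨a, b⟩
    · exact Or.inr ⟨aux_mleads_trans P h0 a c, aux_mleads_trans P h0 d b⟩

lemma aux_mleads_iff (h : ∀ i j, 0 ≤ P i j) (i j : S) :
    mleads P i j ↔ ∃ m : ℕ, 1 ≤ m ∧ m ≤ Fintype.card S ∧ 0 < (P ^ m) i j := by
  constructor
  · rintro ⟨n, hn, hp⟩
    exact aux_shorten P h n hn i j hp
  · rintro ⟨m, h1, -, hp⟩
    exact ⟨m, h1, hp⟩

lemma aux_sum_pos_iff (h : ∀ i j, 0 ≤ P i j) (i j : S) :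
    0 < (∑ n ∈ Finset.Icc 1 (Fintype.card S), P ^ n) i j ↔ mleads P i j := by
  rw [Matrix.sum_apply]
  constructor
  · intro hp
    obtain ⟨m, hm, hmp⟩ := aux_exPos _ _ hp
    rw [Finset.mem_Icc] at hm
    exact ⟨m, hm.1, hmp⟩
  · intro hl
    rw [aux_mleads_iff P h] at hl
    obtain ⟨m, h1, h2, hp⟩ := hl
    exact Finset.sum_pos' (fun k _ => aux_pow_nonneg P h k i j)
      ⟨m, Finset.mem_Icc.mpr ⟨h1, h2⟩, hp⟩

end MainAux

theorem stmt_3 {S : Type*} [Fintype S] [Nonempty S] [DecidableEq S]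
    (P : Matrix S S ℝ) (hP : isStochastic P) :
    (∃! C : Set S, mClosedClass P C) ↔
      ∃ j : S, ∀ i : S, 0 < (∑ n ∈ Finset.Icc 1 (Fintype.card S), P ^ n) i j := by
  have h0 := hP.1
  constructor
  · rintro ⟨C, ⟨⟨i0, rfl⟩, hclosed⟩, huniq⟩
    refine ⟨i0, fun i => (aux_sum_pos_iff P h0 i i0).2 ?_⟩
    -- i0 leads back to itself, using stochasticity and closedness of its class
    have hself : mleads P i0 i0 := by
      obtain ⟨j1, -, hj1⟩ := aux_exPos Finset.univ (P i0) (by rw [hP.2 i0]; norm_num)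
      have hl1 : mleads P i0 j1 := ⟨1, le_rfl, by rwa [pow_one]⟩
      have hj1C : mcomm P i0 j1 := hclosed i0 (Or.inl rfl) j1 hl1
      rcases hj1C with rfl | ⟨-, h2⟩
      · exact hl1
      · exact aux_mleads_trans P h0 hl1 h2
    -- find a state k reachable from i whose class is closed
    classical
    set Rch : S → Finset S := fun x => Finset.univ.filter (fun k => x = k ∨ mleads P x k)
      with hRch
    have hmem : ∀ x, x ∈ Rch x := fun x =>
      Finset.mem_filter.mpr ⟨Finset.mem_univ x, Or.inl rfl⟩
    obtain ⟨k, hk, hkmin⟩ :=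
      Finset.exists_min_image (Rch i) (fun x => (Rch x).card) ⟨i, hmem i⟩
    have hclosedk : mClosed P {l | mcomm P k l} := by
      intro x hx l hxl
      have hkl : mleads P k l := by
        rcases hx with rfl | ⟨h1, -⟩
        · exact hxl
        · exact aux_mleads_trans P h0 h1 hxl
      have hsub : Rch l ⊆ Rch k := by
        intro y hy
        rcases (Finset.mem_filter.mp hy).2 with rfl | hly
        · exact Finset.mem_filter.mpr ⟨Finset.mem_univ _, Or.inr hkl⟩
        · exact Finset.mem_filter.mpr
            ⟨Finset.mem_univ _, Or.inr (aux_mleads_trans P h0 hkl hly)⟩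
      have hlmem : l ∈ Rch i := by
        rcases (Finset.mem_filter.mp hk).2 with rfl | hik
        · exact Finset.mem_filter.mpr ⟨Finset.mem_univ _, Or.inr hkl⟩
        · exact Finset.mem_filter.mpr
            ⟨Finset.mem_univ _, Or.inr (aux_mleads_trans P h0 hik hkl)⟩
      have hcardeq : Rch l = Rch k := Finset.eq_of_subset_of_card_le hsub (hkmin l hlmem)
      have hkRl : k ∈ Rch l := hcardeq ▸ hmem k
      have hlk : mleads P l k := by
        rcases (Finset.mem_filter.mp hkRl).2 with rfl | h'
        · exact hkl
        · exact h'
      exact Or.inr ⟨hkl, hlk⟩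
    have hEq := huniq {l | mcomm P k l} ⟨⟨k, rfl⟩, hclosedk⟩
    have hki0 : mcomm P k i0 := by
      rw [Set.ext_iff] at hEq
      exact (hEq i0).2 (Or.inl rfl)
    have hk0 : mleads P k i0 := by
      rcases hki0 with rfl | ⟨h1, -⟩
      · exact hself
      · exact h1
    rcases (Finset.mem_filter.mp hk).2 with rfl | h'
    · exact hk0
    · exact aux_mleads_trans P h0 h' hk0
  · rintro ⟨j0, hj0⟩
    have hj0' : ∀ i, mleads P i j0 := fun i => (aux_sum_pos_iff P h0 i j0).1 (hj0 i)
    refine ⟨{k | mcomm P j0 k}, ⟨⟨j0, rfl⟩, ?_⟩, ?_⟩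
    · intro x hx l hxl
      have h1 : mleads P j0 l := by
        rcases hx with rfl | ⟨ha, -⟩
        · exact hxl
        · exact aux_mleads_trans P h0 ha hxl
      exact Or.inr ⟨h1, hj0' l⟩
    · rintro C' ⟨⟨i0, rfl⟩, hcl⟩
      have hmemc : mcomm P i0 j0 := hcl i0 (Or.inl rfl) j0 (hj0' i0)
      ext l
      simp only [Set.mem_setOf_eq]
      constructor
      · intro h'
        exact aux_mcomm_trans P h0 (aux_mcomm_symm P hmemc) h'
      · intro h'
        exact aux_mcomm_trans P h0 hmemc h'
end

section
/- Let p be the kernel of an m-th order Markov chain on a finite alphabet A, and suppose p is irreducible when viewed as a first-order chain on A^m (the transition matrix ℙ on A^m defined by ℙ(x, x_2...x_m a) = p(x,a) is irreducible). If the skeleton order K := sup_{x ∈ A^m} sup_{a ∈ A} τ(x,a) satisfies K < m, then p(x,a) > 0 for all x ∈ A^m and a ∈ A; consequently K = 0. Hence for an irreducible chain the only possibilities are K = 0 or K = m. -/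
open scoped Classical

set_option linter.unusedSectionVars false

section Aux
variable {A : Type*} [Fintype A] [DecidableEq A]

lemma mem_tauSet_m (m : ℕ) (p : List A → A → ℝ) (x : List A) (a : A)
    (hx : x.length = m) (hp : isKernel m p) : m ∈ tauSet m p x a := by
  rcases ((hp x hx).1 a).eq_or_lt with h | h
  · left
    intro y hy
    have hy0 : y = [] := List.eq_nil_of_length_eq_zero (by simpa using hy)
    subst hy0
    simpa using h.symm
  · right
    intro y hy
    have hy0 : y = [] := List.eq_nil_of_length_eq_zero (by simpa using hy)
    subst hy0
    simpa using h

lemma tau_le_m (m : ℕ) (p : List A → A → ℝ) (x : List A) (a : A)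
    (hx : x.length = m) (hp : isKernel m p) : tau m p x a ≤ m :=
  Nat.sInf_le (mem_tauSet_m m p x a hx hp)

lemma tau_le_skOrder (m : ℕ) (p : List A → A → ℝ) (x : List A) (a : A)
    (hx : x.length = m) (hp : isKernel m p) : tau m p x a ≤ skOrder m p := by
  apply le_csSup
  · exact ⟨m, by rintro n ⟨x', a', hx', rfl⟩; exact tau_le_m m p x' a' hx' hp⟩
  · exact ⟨x, a, hx, rfl⟩

end Aux

theorem stmt_4 {A : Type*} [Fintype A] [DecidableEq A] (m : ℕ) (hm : 1 ≤ m)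
    (p : List A → A → ℝ) (hp : isKernel m p)
    (hirr : ∀ x z : List.Vector A m, ∃ n : ℕ, 1 ≤ n ∧ 0 < (PP m p ^ n) x z)
    (hK : skOrder m p < m) :
    (∀ (x : List A) (a : A), x.length = m → 0 < p x a) ∧ skOrder m p = 0 := by
  have key : ∀ (x : List A) (a : A), x.length = m → 0 < p x a := by
    intro x a hx
    rcases ((hp x hx).1 a).eq_or_lt with hzero | h
    · exfalso
      have hzero' : p x a = 0 := hzero.symm
      set i := tau m p x a with hi_def
      have hne : (tauSet m p x a).Nonempty := ⟨m, mem_tauSet_m m p x a hx hp⟩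
      have hmem : i ∈ tauSet m p x a := Nat.sInf_mem hne
      have him : i < m := lt_of_le_of_lt (tau_le_skOrder m p x a hx hp) hK
      have hall0 : ∀ y : List A, y.length = m - i → p (y ++ x.drop (m - i)) a = 0 := by
        rcases hmem with h0 | hpos
        · exact h0
        · exfalso
          have hthis := hpos (x.take (m - i)) (by rw [List.length_take]; omega)
          rw [List.take_append_drop] at hthis
          exact absurd hzero' hthis.ne'
      set s := x.drop (m - i) with hs
      have hslen : s.length = i := by rw [hs, List.length_drop, hx]; omega
      set y0 := List.replicate (m - 1 - i) a with hy0
      have hy0len : y0.length = m - 1 - i := by simp [hy0]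
      have hzlen : (y0 ++ s ++ [a]).length = m := by
        simp only [List.length_append, List.length_singleton, hy0len, hslen]
        omega
      set z : List.Vector A m := ⟨y0 ++ s ++ [a], hzlen⟩ with hz
      have hcol : ∀ w : List.Vector A m, PP m p w z = 0 := by
        intro w
        unfold PP
        split
        · rename_i hex
          have hspec := hex.choose_spec
          have hz1 : z.toList = (y0 ++ s) ++ [a] := by
            show (y0 ++ s ++ [a]) = (y0 ++ s) ++ [a]
            rfl
          have hspec2 : (y0 ++ s) ++ [a] = List.drop 1 w.toList ++ [hex.choose] := by
            exact hz1.symm.trans hspec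
          have hinj := List.append_inj' hspec2 (by rfl)
          have hdrop : w.toList.drop 1 = y0 ++ s := hinj.1.symm
          have hch : hex.choose = a := by
            have := hinj.2
            simpa using this.symm
          have hwne : w.toList ≠ [] := by
            have h2 : w.toList.length = m := w.2
            intro habs
            rw [habs] at h2
            simp at h2
            omega
          have hwl : w.toList = w.toList.head hwne :: (y0 ++ s) := by
            rw [← hdrop, List.drop_one, List.cons_head_tail]
          rw [hch, hwl]
          have : (w.toList.head hwne :: y0) ++ s = w.toList.head hwne :: (y0 ++ s) := by
            simp
          rw [← this]
          apply hall0
          simp only [List.length_cons, hy0len]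
          omega
        · rfl
      obtain ⟨n, hn1, hnpos⟩ := hirr z z
      obtain ⟨k, rfl⟩ := Nat.exists_eq_succ_of_ne_zero (by omega : n ≠ 0)
      rw [pow_succ, Matrix.mul_apply] at hnpos
      simp only [hcol, mul_zero, Finset.sum_const_zero] at hnpos
      exact lt_irrefl 0 hnpos
    · exact h
  refine ⟨key, ?_⟩
  have htau0 : ∀ (x : List A) (a : A), x.length = m → tau m p x a = 0 := by
    intro x a hx
    apply Nat.sInf_eq_zero.mpr
    left
    refine Or.inr ?_
    intro y hy
    have hdrop : x.drop (m - 0) = [] := by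
      rw [Nat.sub_zero, ← hx]
      simp
    rw [hdrop, List.append_nil]
    exact key y a (by simpa using hy)
  rcases isEmpty_or_nonempty A with hA | hA
  · have hempty : {n : ℕ | ∃ (x : List A) (a : A), x.length = m ∧ n = tau m p x a} = ∅ := by
      ext n
      simp only [Set.mem_setOf_eq, Set.mem_empty_iff_false, iff_false]
      rintro ⟨x, a, -, -⟩
      exact hA.elim a
    unfold skOrder
    rw [hempty]
    exact csSup_empty
  · apply le_antisymm _ (Nat.zero_le _)
    apply csSup_le
    · exact ⟨tau m p (List.replicate m (Classical.arbitrary A)) (Classical.arbitrary A),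
        List.replicate m (Classical.arbitrary A), Classical.arbitrary A, by simp, rfl⟩
    · rintro n ⟨x, a, hx, rfl⟩
      exact le_of_eq (htau0 x a hx)
end

section
/- With notation as above (m-th order kernel p on finite A with skeleton order K, skeleton matrix 𝕄 on A^K, induced first-order matrix ℙ on A^m, and 𝒜 the set of 𝕄-admissible words of length m): if C is a closed communicating class of the Boolean matrix 𝕄 and we set R = { ab ∈ A^m : a ∈ C, ab ∈ 𝒜 } (where a ∈ A^K is the prefix of length K), then R is a communicating class of ℙ, i.e., any two states of R communicate under ℙ. -/
open scoped Classical

/- ---------------- Auxiliary lemmas ---------------- -/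

section Aux

lemma relPow_add {E : Type*} (R : E → E → Prop) (a b : ℕ) (i j : E) :
    relPow R (a + b) i j ↔ ∃ k, relPow R a i k ∧ relPow R b k j := by
  induction b generalizing j with
  | zero =>
    simp only [Nat.add_zero]
    constructor
    · intro h; exact ⟨j, h, rfl⟩
    · rintro ⟨k, hk, rfl⟩; exact hk
  | succ b ih =>
    show (∃ k, relPow R (a + b) i k ∧ R k j) ↔ _
    constructor
    · rintro ⟨k, hk, hR⟩
      obtain ⟨l, hl, hk'⟩ := (ih k).1 hk
      exact ⟨l, hl, k, hk', hR⟩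
    · rintro ⟨l, hl, k, hk, hR⟩
      exact ⟨k, (ih k).2 ⟨l, hl, hk⟩, hR⟩

lemma relLeads_trans {E : Type*} {R : E → E → Prop} {i j k : E}
    (h1 : relLeads R i j) (h2 : relLeads R j k) : relLeads R i k := by
  obtain ⟨n, hn, hp⟩ := h1
  obtain ⟨n', hn', hp'⟩ := h2
  exact ⟨n + n', by omega, (relPow_add R n n' i k).2 ⟨j, hp, hp'⟩⟩

variable {A : Type*} [Fintype A] [DecidableEq A]

lemma PP_eq {m : ℕ} (p : List A → A → ℝ) (x z : List.Vector A m) (a : A)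
    (hz : z.toList = x.toList.drop 1 ++ [a]) : PP m p x z = p x.toList a := by
  have h : ∃ a : A, z.toList = x.toList.drop 1 ++ [a] := ⟨a, hz⟩
  unfold PP
  rw [dif_pos h]
  have hs := hz.symm.trans h.choose_spec
  have : a = h.choose := by
    have := List.append_cancel_left hs
    simpa using this
  exact congrArg (p x.toList) this.symm

lemma PP_nonneg {m : ℕ} {p : List A → A → ℝ} (hp : isKernel m p)
    (x z : List.Vector A m) : 0 ≤ PP m p x z := by
  unfold PP
  split
  · exact (hp x.toList x.toList_length).1 _
  · exact le_refl 0

lemma PPpow_nonneg {m : ℕ} {p : List A → A → ℝ} (hp : isKernel m p)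
    (n : ℕ) (x z : List.Vector A m) : 0 ≤ ((PP m p) ^ n) x z := by
  induction n generalizing x z with
  | zero =>
    simp only [pow_zero, Matrix.one_apply]
    split <;> norm_num
  | succ n ih =>
    rw [pow_succ, Matrix.mul_apply]
    exact Finset.sum_nonneg fun k _ => mul_nonneg (ih x k) (PP_nonneg hp k z)

lemma pow_pos_trans {m : ℕ} {p : List A → A → ℝ} (hp : isKernel m p)
    {a b : ℕ} {x y z : List.Vector A m}
    (h1 : 0 < ((PP m p) ^ a) x y) (h2 : 0 < ((PP m p) ^ b) y z) :
    0 < ((PP m p) ^ (a + b)) x z := by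
  rw [pow_add, Matrix.mul_apply]
  have hle : ((PP m p) ^ a) x y * ((PP m p) ^ b) y z ≤
      ∑ k, ((PP m p) ^ a) x k * ((PP m p) ^ b) k z :=
    Finset.single_le_sum
      (fun k _ => mul_nonneg (PPpow_nonneg hp a x k) (PPpow_nonneg hp b k z))
      (Finset.mem_univ y)
  exact lt_of_lt_of_le (mul_pos h1 h2) hle

/-- One PP-step following a skeleton transition. -/
lemma step_lemma {m K : ℕ} (hKm : K ≤ m) {p : List A → A → ℝ}
    {u v : List.Vector A K} (hR : Mrel m K p u v)
    (x : List.Vector A m) (hx : x.toList.drop (m - K) = u.toList) :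
    ∃ y : List.Vector A m, 0 < PP m p x y ∧ y.toList.drop (m - K) = v.toList := by
  obtain ⟨hlen, a, hv, hpos⟩ := hR
  have hK1 : 1 ≤ K := by
    have h1 : v.toList.length = K := v.toList_length
    have h2 : u.toList.length = K := u.toList_length
    rw [hv] at h1
    simp only [List.length_append, List.length_drop, List.length_cons,
      List.length_nil, h2] at h1
    omega
  have hxl : x.toList.length = m := x.toList_length
  -- positivity
  have hsplit : x.toList.take (m - K) ++ u.toList = x.toList := by
    rw [← hx, List.take_append_drop]
  have hplen : (x.toList.take (m - K)).length = m - K := by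
    simp [hxl]
  have hxa : 0 < p x.toList a := by
    rw [← hsplit]; exact hpos _ hplen
  -- the new word
  have hlen' : (x.toList.drop 1 ++ [a]).length = m := by
    simp [hxl]; omega
  refine ⟨⟨x.toList.drop 1 ++ [a], hlen'⟩, ?_, ?_⟩
  · rw [PP_eq p x ⟨x.toList.drop 1 ++ [a], hlen'⟩ a rfl]; exact hxa
  · show (x.toList.drop 1 ++ [a]).drop (m - K) = v.toList
    rw [List.drop_append, List.drop_drop]
    have h1 : (x.toList.drop 1).length = m - 1 := by simp [hxl]
    have h2 : m - K - (x.toList.drop 1).length = 0 := by omega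
    have h3 : 1 + (m - K) = (m - K) + 1 := by omega
    rw [h2, h3]
    have h4 : x.toList.drop (m - K + 1) = u.toList.drop 1 := by
      rw [← hx, List.drop_drop]
    simp [h4, hv]

/-- Following a skeleton path of length `n` by PP-steps. -/
lemma follow_lemma {m K : ℕ} (hKm : K ≤ m) {p : List A → A → ℝ} (hp : isKernel m p)
    {n : ℕ} {u w : List.Vector A K} (hpow : relPow (Mrel m K p) n u w)
    (x : List.Vector A m) (hx : x.toList.drop (m - K) = u.toList) :
    ∃ y : List.Vector A m, 0 < ((PP m p) ^ n) x y ∧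
      y.toList.drop (m - K) = w.toList := by
  induction n generalizing w with
  | zero =>
    refine ⟨x, ?_, ?_⟩
    · simp [Matrix.one_apply]
    · rw [hx, hpow]
  | succ n ih =>
    obtain ⟨k, hk, hR⟩ := hpow
    obtain ⟨y, hy, hys⟩ := ih hk
    obtain ⟨y', hy', hys'⟩ := step_lemma hKm hR y hys
    refine ⟨y', ?_, hys'⟩
    have h1 : 0 < ((PP m p) ^ 1) y y' := by rwa [pow_one]
    exact pow_pos_trans hp hy h1

/-- Finishing: following the letters of an admissible word `z` once the
last `K` letters match a prefix of `z`. -/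
lemma finish_lemma {m K : ℕ} (hm : 1 ≤ m) (hKm : K ≤ m) (hK1 : 1 ≤ K)
    {p : List A → A → ℝ} (hp : isKernel m p)
    {z : List.Vector A m} (hadm : admissible m K p z.toList) :
    ∀ d, d ≤ m - K → ∀ w : List.Vector A m,
      w.toList.drop d = z.toList.take (m - d) → 0 < ((PP m p) ^ d) w z := by
  intro d
  induction d with
  | zero =>
    intro _ w hw
    have hzl : z.toList.length = m := z.toList_length
    have heq : w.toList = z.toList := by
      rw [Nat.sub_zero] at hw
      rw [List.drop_zero] at hw
      rw [hw]
      exact List.take_of_length_le (le_of_eq hzl)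
    have hwz : w = z := by
      cases w; cases z
      exact Subtype.ext heq
    subst hwz
    simp [Matrix.one_apply]
  | succ d ih =>
    intro hd w hw
    have hzl : z.toList.length = m := z.toList_length
    have hwl : w.toList.length = m := w.toList_length
    set i := m - K - d - 1 with hi_def
    have hi : i + K < m := by omega
    obtain ⟨_, a, heqv, hpos⟩ := hadm i hi
    -- suffix of w equals the i-th window of z
    have hsfx : w.toList.drop (m - K) = (z.toList.drop i).take K := by
      have h1 : w.toList.drop (m - K) = (w.toList.drop (d + 1)).drop i := by
        rw [List.drop_drop]
        congr 1
        omega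
      rw [h1, hw, List.drop_take]
      congr 1
      omega
    -- positivity of the step
    have hwa : 0 < p w.toList a := by
      have hsplit : w.toList.take (m - K) ++ (z.toList.drop i).take K = w.toList := by
        rw [← hsfx, List.take_append_drop]
      rw [← hsplit]
      exact hpos _ (by simp [hwl])
    -- identify the letter `a` with `z[m-d-1]`
    have hLlen : (((z.toList.drop i).take K).drop 1).length = K - 1 := by
      simp [hzl]
      omega
    have hsome : z.toList[m - d - 1]? = some a := by
      have h2 := congrArg (fun l => l[K - 1]?) heqv
      rw [List.getElem?_take, if_pos (by omega), List.getElem?_drop] at h2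
      have h3 : ((((z.toList.drop i).take K).drop 1) ++ [a])[K - 1]? = some a := by
        rw [← hLlen]
        exact List.getElem?_concat_length
      rw [show m - d - 1 = i + 1 + (K - 1) by omega]
      exact h2.trans h3
    have hztake : z.toList.take (m - d) = z.toList.take (m - (d + 1)) ++ [a] := by
      rw [show m - d = (m - d - 1) + 1 by omega, List.take_succ, hsome]
      rw [show m - (d + 1) = m - d - 1 by omega]
      rfl
    -- the next word
    have hlen' : (w.toList.drop 1 ++ [a]).length = m := by
      simp [hwl]
      omega
    have hstep : 0 < PP m p w ⟨w.toList.drop 1 ++ [a], hlen'⟩ := by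
      rw [PP_eq p w ⟨w.toList.drop 1 ++ [a], hlen'⟩ a rfl]
      exact hwa
    have hw' : (w.toList.drop 1 ++ [a]).drop d = z.toList.take (m - d) := by
      rw [List.drop_append, List.drop_drop]
      have h3 : d - (w.toList.drop 1).length = 0 := by simp [hwl]; omega
      rw [h3, show 1 + d = d + 1 by omega, hw, hztake]
      rfl
    have hih := ih (by omega) ⟨w.toList.drop 1 ++ [a], hlen'⟩ hw'
    have h1 : 0 < ((PP m p) ^ 1) w ⟨w.toList.drop 1 ++ [a], hlen'⟩ := by rwa [pow_one]
    have := pow_pos_trans hp h1 hih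
    rwa [show 1 + d = d + 1 by omega] at this

/-- The windows of an admissible word form a skeleton path. -/
lemma window_pow {m K : ℕ} (hKm : K ≤ m) {p : List A → A → ℝ}
    {x : List.Vector A m} (hadm : admissible m K p x.toList) :
    ∀ i, i ≤ m - K → ∀ a b : List.Vector A K,
      a.toList = x.toList.take K → b.toList = (x.toList.drop i).take K →
      relPow (Mrel m K p) i a b := by
  intro i
  induction i with
  | zero =>
    intro _ a b ha hb
    apply List.Vector.toList_injective
    rw [ha, hb, List.drop_zero]
  | succ i ih =>
    intro hi a b ha hb
    have hxl : x.toList.length = m := x.toList_length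
    have hlen : ((x.toList.drop i).take K).length = K := by
      simp [hxl]
      omega
    refine ⟨⟨(x.toList.drop i).take K, hlen⟩, ih (by omega) a _ ha rfl, ?_⟩
    show Mprop m K p ((x.toList.drop i).take K) b.toList
    rw [hb]
    exact hadm i (by omega)

/-- Key: from any state of `R` one either equals or leads to any other state of `R`. -/
lemma key_lemma {m K : ℕ} (hm : 1 ≤ m) (hKm : K ≤ m) {p : List A → A → ℝ}
    (hp : isKernel m p) {C : Set (List.Vector A K)}
    (hC : relClosedClass (Mrel m K p) C) :
    ∀ x ∈ Rclass m K p C, ∀ z ∈ Rclass m K p C,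
      x = z ∨ mleads (PP m p) x z := by
  intro x hx z hz
  obtain ⟨⟨cx, hcxC, hcx⟩, hadmx⟩ := hx
  obtain ⟨⟨cz, hczC, hcz⟩, hadmz⟩ := hz
  have hxl : x.toList.length = m := x.toList_length
  have hzl : z.toList.length = m := z.toList_length
  rcases Nat.eq_zero_or_pos K with hK0 | hK1
  · exfalso
    subst hK0
    obtain ⟨_, a, hcontr, _⟩ := hadmx 0 (by omega)
    simp at hcontr
  have huxlen : (x.toList.drop (m - K)).length = K := by
    simp [hxl]
    omega
  set ux : List.Vector A K := ⟨x.toList.drop (m - K), huxlen⟩ with hux_def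
  have hux_toList : ux.toList = x.toList.drop (m - K) := rfl
  have hux_mem : ux ∈ C := by
    rcases Nat.eq_zero_or_pos (m - K) with hmK0 | hmK1
    · have heq : ux = cx := by
        apply List.Vector.toList_injective
        rw [hcx, hux_toList, hmK0, List.drop_zero]
        exact (List.take_of_length_le (by omega)).symm
      rw [heq]
      exact hcxC
    · refine hC.2 cx hcxC ux ⟨m - K, hmK1, ?_⟩
      refine window_pow hKm hadmx (m - K) le_rfl cx ux hcx ?_
      rw [hux_toList]
      exact (List.take_of_length_le (le_of_eq huxlen)).symm
  obtain ⟨i0, hCeq⟩ := hC.1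
  have h1 : relComm (Mrel m K p) i0 ux := by rw [hCeq] at hux_mem; exact hux_mem
  have h2 : relComm (Mrel m K p) i0 cz := by rw [hCeq] at hczC; exact hczC
  have hlink : ux = cz ∨ relLeads (Mrel m K p) ux cz := by
    rcases h1 with h1e | ⟨h1f, h1b⟩ <;> rcases h2 with h2e | ⟨h2f, h2b⟩
    · left; rw [← h1e, ← h2e]
    · right; rw [← h1e]; exact h2f
    · right; rw [← h2e]; exact h1b
    · right; exact relLeads_trans h1b h2f
  rcases hlink with heq | ⟨n, hn1, hpow⟩
  · have hx2z : x.toList.drop (m - K) = z.toList.take K := by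
      rw [← hux_toList, heq, hcz]
    rcases Nat.eq_zero_or_pos (m - K) with hmK0 | hmK1
    · left
      apply List.Vector.toList_injective
      rw [← List.drop_zero (l := x.toList), ← hmK0, hx2z]
      exact List.take_of_length_le (by omega)
    · right
      refine ⟨m - K, hmK1, ?_⟩
      refine finish_lemma hm hKm hK1 hp hadmz (m - K) le_rfl x ?_
      rw [show m - (m - K) = K by omega]
      exact hx2z
  · obtain ⟨y, hy, hys⟩ := follow_lemma hKm hp hpow x rfl
    right
    have hfin : 0 < ((PP m p) ^ (m - K)) y z := by
      refine finish_lemma hm hKm hK1 hp hadmz (m - K) le_rfl y ?_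
      rw [show m - (m - K) = K by omega, hys, hcz]
    exact ⟨n + (m - K), by omega, pow_pos_trans hp hy hfin⟩

end Aux

theorem stmt_8 {A : Type*} [Fintype A] [DecidableEq A] (m K : ℕ) (hm : 1 ≤ m)
    (hKm : K ≤ m)
    (p : List A → A → ℝ) (hp : isKernel m p)
    (hK : ∀ (x x' : List A) (a : A), x.length = m → x'.length = m →
      x.drop (m - K) = x'.drop (m - K) → (0 < p x a ↔ 0 < p x' a))
    (C : Set (List.Vector A K)) (hC : relClosedClass (Mrel m K p) C) :
    ∀ x ∈ Rclass m K p C, ∀ z ∈ Rclass m K p C, mcomm (PP m p) x z := by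
  intro x hx z hz
  rcases key_lemma hm hKm hp hC x hx z hz with rfl | l1
  · exact Or.inl rfl
  · rcases key_lemma hm hKm hp hC z hz x hx with heq | l2
    · exact Or.inl heq.symm
    · exact Or.inr ⟨l1, l2⟩
end
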